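/- (Dimension 64 case of the main theorem.) Define P₆₄(z) = (1 − z)⁸ − (15/2)(1 − z)⁵ z² + (4905/512)(1 − z)² z⁴. For every real y > 0, P₆₄(z(y)) ≥ P₆₄(1/4) > 0; consequently the secrecy function Ξ(y) = P₆₄(z(y))^{-1} of the extremal even unimodular lattice in dimension 64 satisfies Ξ(y) ≤ Ξ(1) = P₆₄(1/4)^{-1}. -/
import Mathlib

open Real Complex

/-- Jacobi theta constant θ₂ on the imaginary axis. -/
noncomputable def theta2 (y : ℝ) : ℝ := ∑' n : ℤ, Real.exp (-Real.pi * y * (n + 1/2)^2)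

/-- Jacobi theta constant θ₃ on the imaginary axis. -/
noncomputable def theta3 (y : ℝ) : ℝ := ∑' n : ℤ, Real.exp (-Real.pi * y * n^2)

/-- Jacobi theta constant θ₄ on the imaginary axis. -/
noncomputable def theta4 (y : ℝ) : ℝ := ∑' n : ℤ, (-1 : ℝ)^n * Real.exp (-Real.pi * y * n^2)

/-- The function z(y) = θ₂(y)⁴θ₄(y)⁴/θ₃(y)⁸. -/
noncomputable def zfun (y : ℝ) : ℝ := theta2 y ^ 4 * theta4 y ^ 4 / theta3 y ^ 8

/-- Denominator polynomial of the secrecy function of the extremal even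
unimodular lattice in dimension 64. -/
noncomputable def P64 (z : ℝ) : ℝ := (1 - z) ^ 8 - 15 / 2 * (1 - z) ^ 5 * z ^ 2 + 4905 / 512 * (1 - z) ^ 2 * z ^ 4

/- ## Summability lemmas -/

lemma summable_g {y : ℝ} (hy : 0 < y) (c : ℝ) :
    Summable fun n : ℤ ↦ rexp (-π * y * ((n : ℝ) + c) ^ 2) := by
  have h : Summable fun n : ℤ ↦ ‖jacobiTheta₂_term n ((c : ℂ) * Complex.I * y) (Complex.I * y)‖ :=
    ((summable_jacobiTheta₂_term_iff _ _).mpr (by simp [hy])).norm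
  refine (h.mul_left (rexp (-π * y * c ^ 2))).congr fun n ↦ ?_
  rw [norm_jacobiTheta₂_term, ← Real.exp_add]
  congr 1
  simp [Complex.mul_im, Complex.mul_re]
  ring

lemma summable_g0 {y : ℝ} (hy : 0 < y) :
    Summable fun n : ℤ ↦ rexp (-π * y * (n : ℝ) ^ 2) := by
  simpa using summable_g hy 0

lemma summable_gn0 {y : ℝ} (hy : 0 < y) :
    Summable fun n : ℤ ↦ ‖rexp (-π * y * (n : ℝ) ^ 2)‖ :=
  (summable_g0 hy).congr fun _ ↦ (Real.norm_of_nonneg (Real.exp_pos _).le).symm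

lemma summable_gnh {y : ℝ} (hy : 0 < y) :
    Summable fun n : ℤ ↦ ‖rexp (-π * y * ((n : ℝ) + 1/2) ^ 2)‖ :=
  (summable_g hy (1/2)).congr fun _ ↦ (Real.norm_of_nonneg (Real.exp_pos _).le).symm

lemma summable_gn1 {y : ℝ} (hy : 0 < y) :
    Summable fun n : ℤ ↦ ‖rexp (-π * y * ((n : ℝ) + 1) ^ 2)‖ :=
  (summable_g hy 1).congr fun _ ↦ (Real.norm_of_nonneg (Real.exp_pos _).le).symm

lemma summable_gn4 {y : ℝ} (hy : 0 < y) :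
    Summable fun n : ℤ ↦ ‖(-1 : ℝ)^n * rexp (-π * y * (n : ℝ) ^ 2)‖ := by
  refine (summable_g0 hy).congr fun n ↦ ?_
  rw [norm_mul, norm_zpow, norm_neg, norm_one, one_zpow, one_mul,
    Real.norm_of_nonneg (Real.exp_pos _).le]

/- ## Splitting a double sum over ℤ × ℤ by parity -/

def sEven : Set (ℤ × ℤ) := {p | (p.1 + p.2) % 2 = 0}

def eEven : ℤ × ℤ ≃ sEven where
  toFun p := ⟨(p.1 + p.2, p.1 - p.2), by simp [sEven]; omega⟩
  invFun q := ((q.1.1 + q.1.2) / 2, (q.1.1 - q.1.2) / 2)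
  left_inv p := by ext <;> simp <;> omega
  right_inv q := by
    have h := q.2
    simp only [sEven, Set.mem_setOf_eq] at h
    ext <;> simp <;> omega

def eOdd : ℤ × ℤ ≃ (sEvenᶜ : Set (ℤ × ℤ)) where
  toFun p := ⟨(p.1 + p.2 + 1, p.1 - p.2), by simp [sEven]; omega⟩
  invFun q := ((q.1.1 + q.1.2 - 1) / 2, (q.1.1 - q.1.2 - 1) / 2)
  left_inv p := by ext <;> simp <;> omega
  right_inv q := by
    have h := q.2
    simp only [sEven, Set.mem_compl_iff, Set.mem_setOf_eq] at h
    ext <;> simp <;> omega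

lemma tsum_split (f : ℤ × ℤ → ℝ) (hf : Summable f) :
    ∑' p : ℤ × ℤ, f p =
      (∑' p : ℤ × ℤ, f (p.1 + p.2, p.1 - p.2)) + ∑' p : ℤ × ℤ, f (p.1 + p.2 + 1, p.1 - p.2) := by
  rw [← Summable.tsum_add_tsum_compl (s := sEven) (hf.subtype _) (hf.subtype _)]
  congr 1
  · exact (eEven.tsum_eq fun q : sEven ↦ f q).symm
  · exact (eOdd.tsum_eq fun q : (sEvenᶜ : Set (ℤ × ℤ)) ↦ f q).symm

/- ## Landen-type identities -/

lemma landen3 {y : ℝ} (hy : 0 < y) :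
    theta3 y ^ 2 = theta3 (2*y) ^ 2 + theta2 (2*y) ^ 2 := by
  have h2y : (0:ℝ) < 2*y := by linarith
  rw [theta3, sq, tsum_mul_tsum_of_summable_norm (summable_gn0 hy) (summable_gn0 hy),
    tsum_split _ (summable_mul_of_summable_norm (summable_gn0 hy) (summable_gn0 hy))]
  congr 1
  · rw [theta3, sq, tsum_mul_tsum_of_summable_norm (summable_gn0 h2y) (summable_gn0 h2y)]
    refine tsum_congr fun p ↦ ?_
    rw [← Real.exp_add, ← Real.exp_add]
    congr 1
    push_cast
    ring
  · rw [theta2, sq, tsum_mul_tsum_of_summable_norm (summable_gnh h2y) (summable_gnh h2y)]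
    refine tsum_congr fun p ↦ ?_
    rw [← Real.exp_add, ← Real.exp_add]
    congr 1
    push_cast
    ring

lemma sign_split (u v : ℤ) : ((-1:ℝ))^(u+v) * (-1)^(u-v) = 1 := by
  rw [← zpow_add₀ (by norm_num : (-1:ℝ) ≠ 0)]
  have h : u + v + (u - v) = 2 * u := by ring
  rw [h, zpow_mul]
  norm_num

lemma landen4 {y : ℝ} (hy : 0 < y) :
    theta4 y ^ 2 = theta3 (2*y) ^ 2 - theta2 (2*y) ^ 2 := by
  have h2y : (0:ℝ) < 2*y := by linarith
  rw [theta4, sq, tsum_mul_tsum_of_summable_norm (summable_gn4 hy) (summable_gn4 hy),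
    tsum_split _ (summable_mul_of_summable_norm (summable_gn4 hy) (summable_gn4 hy)),
    sub_eq_add_neg]
  congr 1
  · rw [theta3, sq, tsum_mul_tsum_of_summable_norm (summable_gn0 h2y) (summable_gn0 h2y)]
    refine tsum_congr fun p ↦ ?_
    rw [mul_mul_mul_comm, sign_split p.1 p.2, one_mul, ← Real.exp_add, ← Real.exp_add]
    congr 1
    push_cast
    ring
  · rw [theta2, sq, tsum_mul_tsum_of_summable_norm (summable_gnh h2y) (summable_gnh h2y),
      ← tsum_neg]
    refine tsum_congr fun p ↦ ?_
    have hs : ((-1:ℝ))^(p.1+p.2+1) * (-1)^(p.1-p.2) = -1 := by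
      rw [zpow_add₀ (by norm_num : (-1:ℝ) ≠ 0) _ 1, zpow_one, mul_comm _ (-1:ℝ), mul_assoc,
        sign_split]
      norm_num
    rw [mul_mul_mul_comm, hs, neg_one_mul, ← Real.exp_add, ← Real.exp_add, neg_inj]
    congr 1
    push_cast
    ring

lemma landen2 {y : ℝ} (hy : 0 < y) :
    theta2 y ^ 2 = 2 * theta2 (2*y) * theta3 (2*y) := by
  have h2y : (0:ℝ) < 2*y := by linarith
  rw [theta2, sq, tsum_mul_tsum_of_summable_norm (summable_gnh hy) (summable_gnh hy),
    tsum_split _ (summable_mul_of_summable_norm (summable_gnh hy) (summable_gnh hy)),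
    two_mul, add_mul]
  congr 1
  · rw [theta2, theta3, tsum_mul_tsum_of_summable_norm (summable_gnh h2y) (summable_gn0 h2y)]
    refine tsum_congr fun p ↦ ?_
    rw [← Real.exp_add, ← Real.exp_add]
    congr 1
    push_cast
    ring
  · have h1 : theta3 (2*y) = ∑' n : ℤ, rexp (-π * (2*y) * ((n:ℝ) + 1)^2) := by
      rw [theta3, ← (Equiv.addRight (1:ℤ)).tsum_eq (fun n : ℤ ↦ rexp (-π * (2*y) * (n:ℝ)^2))]
      refine tsum_congr fun n ↦ ?_
      simp only [Equiv.coe_addRight]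
      push_cast
      ring_nf
    rw [mul_comm (theta2 (2*y)) (theta3 (2*y)), theta2, h1,
      tsum_mul_tsum_of_summable_norm (summable_gn1 h2y) (summable_gnh h2y)]
    refine tsum_congr fun p ↦ ?_
    rw [← Real.exp_add, ← Real.exp_add]
    congr 1
    push_cast
    ring

/- ## Jacobi identity, positivity, and θ₂(1) = θ₄(1) -/

lemma jacobi_identity {y : ℝ} (hy : 0 < y) :
    theta2 y ^ 4 + theta4 y ^ 4 = theta3 y ^ 4 := by
  have hA := landen3 hy
  have hB := landen4 hy
  have hC := landen2 hy
  nlinarith [hA, hB, hC, sq_nonneg (theta2 (2*y)), sq_nonneg (theta3 (2*y))]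

lemma theta3_pos {y : ℝ} (hy : 0 < y) : 0 < theta3 y := by
  rw [theta3]
  exact Summable.tsum_pos (summable_g0 hy) (fun n ↦ (Real.exp_pos _).le) 0 (Real.exp_pos _)

lemma theta2_pos {y : ℝ} (hy : 0 < y) : 0 < theta2 y := by
  rw [theta2]
  exact Summable.tsum_pos (summable_g hy (1/2)) (fun n ↦ (Real.exp_pos _).le) 0 (Real.exp_pos _)

lemma theta2_one : theta2 1 = theta4 1 := by
  have key := Complex.tsum_exp_neg_quadratic (a := 1) (by norm_num) (Complex.I / 2)
  have h4 : (theta4 1 : ℂ) = ∑' n : ℤ, cexp (-π * 1 * (n:ℂ) ^ 2 + 2 * π * (Complex.I/2) * n) := by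
    rw [theta4, Complex.ofReal_tsum]
    refine tsum_congr fun n ↦ ?_
    have h1 : (-π * 1 * (n:ℂ) ^ 2 + 2 * π * (Complex.I/2) * n)
        = ((-π * 1 * (n:ℝ)^2 : ℝ) : ℂ) + n * (π * Complex.I) := by
      push_cast
      ring
    rw [h1, Complex.exp_add, Complex.exp_int_mul, Complex.exp_pi_mul_I]
    push_cast
    ring
  have h2 : (theta2 1 : ℂ) = ∑' n : ℤ, cexp (-π / 1 * ((n:ℂ) + Complex.I * (Complex.I/2)) ^ 2) := by
    have hre : theta2 1 = ∑' n : ℤ, rexp (-π / 1 * ((n:ℝ) - 1/2) ^ 2) := by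
      rw [theta2, ← (Equiv.neg ℤ).tsum_eq (fun n : ℤ ↦ rexp (-π / 1 * ((n:ℝ) - 1/2) ^ 2))]
      refine tsum_congr fun n ↦ ?_
      simp only [Equiv.neg_apply]
      push_cast
      ring_nf
    rw [hre, Complex.ofReal_tsum]
    refine tsum_congr fun n ↦ ?_
    rw [Complex.ofReal_exp]
    congr 1
    have : (Complex.I * (Complex.I / 2)) = -(1/2) := by
      rw [← mul_div_assoc, Complex.I_mul_I]
      norm_num
    rw [this]
    push_cast
    ring
  have hfin : (theta4 1 : ℂ) = (theta2 1 : ℂ) := by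
    rw [h4, key, Complex.one_cpow, h2]
    simp
  exact_mod_cast hfin.symm

/- ## Properties of z(y) -/

lemma zfun_nonneg (y : ℝ) : 0 ≤ zfun y := by
  unfold zfun
  positivity

lemma zfun_le {y : ℝ} (hy : 0 < y) : zfun y ≤ 1/4 := by
  have h3 := theta3_pos hy
  have h8 : theta3 y ^ 8 = (theta2 y ^ 4 + theta4 y ^ 4) ^ 2 := by
    rw [jacobi_identity hy]
    ring
  rw [zfun, div_le_iff₀ (by positivity)]
  nlinarith [h8, sq_nonneg (theta2 y ^ 4 - theta4 y ^ 4)]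

lemma zfun_one : zfun 1 = 1/4 := by
  have h2 := theta2_pos one_pos
  have hj := jacobi_identity one_pos
  have h8 : theta3 1 ^ 8 = 4 * theta2 1 ^ 8 := by
    have h4 : theta3 1 ^ 4 = 2 * theta2 1 ^ 4 := by
      rw [← hj, ← theta2_one]
      ring
    have : theta3 1 ^ 8 = (theta3 1 ^ 4) ^ 2 := by ring
    rw [this, h4]
    ring
  have hd : (0:ℝ) < 4 * theta2 1 ^ 8 := by
    have := pow_pos h2 8
    linarith
  rw [zfun, ← theta2_one, h8, div_eq_iff hd.ne']
  ring

/- ## The polynomial P₆₄ -/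

lemma P64_quarter_pos : 0 < P64 (1 / 4) := by norm_num [P64]

lemma P64_min {z : ℝ} (h0 : 0 ≤ z) (h1 : z ≤ 1/4) : P64 (1/4) ≤ P64 z := by
  have ht : 0 ≤ 1/4 - z := by linarith
  unfold P64
  nlinarith [sq_nonneg ((1/4 - z)^3 * (1/4 - z - 3/4)), mul_nonneg (mul_nonneg ht ht) ht,
    mul_nonneg (mul_nonneg (mul_nonneg ht ht) ht) ht,
    mul_nonneg (mul_nonneg (mul_nonneg (mul_nonneg ht ht) ht) ht) ht,
    mul_nonneg (pow_nonneg ht 4) h0, mul_nonneg (pow_nonneg ht 6) ht]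

theorem secrecy_dim64 :
    (∀ y : ℝ, 0 < y → P64 (1 / 4) ≤ P64 (zfun y)) ∧ 0 < P64 (1 / 4) ∧
      (∀ y : ℝ, 0 < y → (P64 (zfun y))⁻¹ ≤ (P64 (zfun 1))⁻¹) ∧
      (P64 (zfun 1))⁻¹ = (P64 (1 / 4))⁻¹ := by
  refine ⟨fun y hy ↦ P64_min (zfun_nonneg y) (zfun_le hy), P64_quarter_pos, fun y hy ↦ ?_,
    by rw [zfun_one]⟩
  rw [zfun_one]
  exact inv_anti₀ P64_quarter_pos (P64_min (zfun_nonneg y) (zfun_le hy))
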